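/- For the basis functions χ_i(x) = L_i(x) − L_{i+1}(x), the weighted stiffness matrix a_{ij} = ∫_{−1}^{1} χ_j'(x) χ_i'(x) (x+1) dx is diagonal with a_{ii} = 2i + 2. -/

import Mathlib

open Polynomial intervalIntegral

/-- The `n`-th Legendre polynomial via Rodrigues' formula. -/
noncomputable def legendre (n : ℕ) : Polynomial ℝ :=
  Polynomial.C ((2 ^ n * n.factorial : ℝ)⁻¹) * Polynomial.derivative^[n] ((X ^ 2 - 1) ^ n)

/-- χ_i = L_i − L_{i+1}. -/
noncomputable def chi (i : ℕ) : Polynomial ℝ := legendre i - legendre (i + 1)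

/-- a_{ij} = ∫_{-1}^1 χ_j' χ_i' (x+1) dx. -/
noncomputable def aMat (i j : ℕ) : ℝ :=
  ∫ x in (-1 : ℝ)..1,
    (Polynomial.derivative (chi j)).eval x * (Polynomial.derivative (chi i)).eval x * (x + 1)

/-! From Rodrigues' formula, `L_{n+1}' = X L_n' + (n+1) L_n` and
`(n+1) L_{n+1} = (n+1) X L_n + (X² - 1) L_n'`; together they give
`(X + 1) χ_i' = -(i+1) (L_i + L_{i+1})`, so `a_{ij} = -(i+1) ∫ χ_j' (L_i + L_{i+1})`.
Since `Lₙ` is orthogonal on `[-1, 1]` to every polynomial of degree `< n` (integrate by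
parts `n` times against `Dⁿ (X² - 1)ⁿ`) and `deg χ_j' ≤ j`, this vanishes for `j < i`; for
`j = i`, one more integration by parts leaves only the boundary term `-χ_i(-1) L_i(-1) = -2`. -/

section Rodrigues

variable {R : Type*} [CommRing R]

theorem iterate_derivative_X_mul (n : ℕ) (p : R[X]) :
    derivative^[n + 1] (X * p) =
      X * derivative^[n + 1] p + ((n : R[X]) + 1) * derivative^[n] p := by
  rw [mul_comm, iterate_derivative_mul_X, nsmul_eq_mul, Nat.add_sub_cancel]
  push_cast
  ring

theorem iterate_derivative_X_sq_sub_one_mul (n : ℕ) (p : R[X]) :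
    derivative^[n + 2] ((X ^ 2 - 1) * p) =
      (X ^ 2 - 1) * derivative^[n + 2] p + 2 * ((n : R[X]) + 2) * X * derivative^[n + 1] p
        + ((n : R[X]) + 2) * ((n : R[X]) + 1) * derivative^[n] p := by
  rw [show (X ^ 2 - 1) * p = X * (X * p) - p by ring, iterate_map_sub,
    iterate_derivative_X_mul (n + 1), iterate_derivative_X_mul (n + 1),
    iterate_derivative_X_mul n]
  push_cast
  ring

noncomputable def rodrigues (n : ℕ) : R[X] := derivative^[n] ((X ^ 2 - 1) ^ n)

theorem derivative_X_sq_sub_one_pow_succ (n : ℕ) :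
    derivative (((X : R[X]) ^ 2 - 1) ^ (n + 1)) =
      ((2 * (n + 1) : ℕ) : R[X]) * (X * (X ^ 2 - 1) ^ n) := by
  rw [derivative_pow_succ]
  simp only [derivative_sub, derivative_X_pow, derivative_one, map_add, map_natCast, map_one]
  push_cast
  ring

theorem derivative_rodrigues (n : ℕ) :
    derivative (rodrigues n : R[X]) = derivative^[n + 1] ((X ^ 2 - 1) ^ n) :=
  (Function.iterate_succ_apply' _ _ _).symm

theorem derivative_rodrigues_succ (n : ℕ) :
    derivative (rodrigues (n + 1) : R[X]) =
      2 * ((n : R[X]) + 1) *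
        (X * derivative (rodrigues n) + ((n : R[X]) + 1) * rodrigues n) := by
  rw [derivative_rodrigues, Function.iterate_succ_apply, derivative_X_sq_sub_one_pow_succ,
    iterate_derivative_natCast_mul, iterate_derivative_X_mul, ← derivative_rodrigues,
    ← rodrigues]
  push_cast
  ring

theorem rodrigues_succ_succ (n : ℕ) :
    (rodrigues (n + 2) : R[X]) =
      2 * (X ^ 2 - 1) * derivative (rodrigues (n + 1)) +
        2 * ((n : R[X]) + 2) * X * rodrigues (n + 1) := by
  have h₁ : (rodrigues (n + 2) : R[X]) =
      derivative^[n + 2] ((X ^ 2 - 1) * (X ^ 2 - 1) ^ (n + 1)) := by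
    rw [rodrigues, pow_succ']
  have h₂ : (rodrigues (n + 2) : R[X]) =
      derivative^[n + 1] (derivative ((X ^ 2 - 1) ^ (n + 2))) := by
    rw [rodrigues, ← Function.iterate_succ_apply]
  -- Expanding `D^{n+2} (X² - 1)^{n+2}` in these two ways, the `Dⁿ (X² - 1)^{n+1}` terms cancel.
  rw [iterate_derivative_X_sq_sub_one_mul, ← derivative_rodrigues, ← rodrigues] at h₁
  rw [derivative_X_sq_sub_one_pow_succ, iterate_derivative_natCast_mul, iterate_derivative_X_mul,
    ← rodrigues] at h₂
  push_cast at h₂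
  linear_combination 2 * h₁ - h₂

theorem rodrigues_succ (n : ℕ) :
    (rodrigues (n + 1) : R[X]) =
      2 * (X ^ 2 - 1) * derivative (rodrigues n) + 2 * ((n : R[X]) + 1) * X * rodrigues n := by
  cases n with
  | zero => simp [rodrigues, one_add_one_eq_two, map_ofNat]
  | succ n => rw [rodrigues_succ_succ]; push_cast; ring

end Rodrigues

theorem legendre_eq_C_mul_rodrigues (n : ℕ) :
    legendre n = C ((2 ^ n * n.factorial : ℝ)⁻¹) * rodrigues n := rfl

theorem C_inv_two_pow_mul_factorial (n : ℕ) :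
    C ((2 ^ n * n.factorial : ℝ)⁻¹) =
      C ((2 ^ (n + 1) * (n + 1).factorial : ℝ)⁻¹) * ((2 * (n + 1) : ℕ) : ℝ[X]) := by
  rw [← map_natCast C, ← C_mul, pow_succ, Nat.factorial_succ]
  congr 1
  push_cast
  field_simp

theorem derivative_legendre_succ (n : ℕ) :
    derivative (legendre (n + 1)) =
      X * derivative (legendre n) + ((n : ℝ[X]) + 1) * legendre n := by
  simp only [legendre_eq_C_mul_rodrigues, C_inv_two_pow_mul_factorial n, mul_assoc,
    derivative_C_mul, derivative_natCast_mul, derivative_rodrigues_succ]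
  push_cast
  ring

theorem legendre_succ (n : ℕ) :
    ((n : ℝ[X]) + 1) * legendre (n + 1) =
      ((n : ℝ[X]) + 1) * X * legendre n + (X ^ 2 - 1) * derivative (legendre n) := by
  simp only [legendre_eq_C_mul_rodrigues, C_inv_two_pow_mul_factorial n, mul_assoc,
    derivative_C_mul, derivative_natCast_mul, rodrigues_succ]
  push_cast
  ring

theorem legendre_zero : legendre 0 = 1 := by
  simp [legendre]

theorem eval_legendre_succ {n : ℕ} {x : ℝ} (hx : x ^ 2 = 1) :
    (legendre (n + 1)).eval x = x * (legendre n).eval x := by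
  have h := congrArg (eval x) (legendre_succ n)
  simp only [eval_mul, eval_add, eval_sub, eval_pow, eval_X, eval_one, eval_natCast, hx,
    sub_self, zero_mul, add_zero] at h
  exact mul_left_cancel₀ (by positivity) (h.trans (mul_assoc _ _ _))

theorem legendre_eval_one (n : ℕ) : (legendre n).eval 1 = 1 := by
  induction n with
  | zero => simp [legendre_zero]
  | succ n ih => rw [eval_legendre_succ (by norm_num), ih, one_mul]

theorem legendre_eval_neg_one (n : ℕ) : (legendre n).eval (-1) = (-1) ^ n := by
  induction n with
  | zero => simp [legendre_zero]
  | succ n ih => rw [eval_legendre_succ (by norm_num), ih, pow_succ, mul_comm]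

theorem natDegree_legendre_le (n : ℕ) : (legendre n).natDegree ≤ n := by
  have h : (((X : ℝ[X]) ^ 2 - 1) ^ n).natDegree = 2 * n := by
    rw [natDegree_pow, ← C_1, natDegree_X_pow_sub_C, mul_comm]
  calc (legendre n).natDegree ≤ (rodrigues n : ℝ[X]).natDegree := natDegree_C_mul_le _ _
    _ ≤ 2 * n - n := h ▸ natDegree_iterate_derivative _ _
    _ = n := by omega

noncomputable def innerL2 (p q : ℝ[X]) : ℝ := ∫ x in (-1 : ℝ)..1, p.eval x * q.eval x

theorem intervalIntegrable_eval_mul_eval (p q : ℝ[X]) :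
    IntervalIntegrable (fun x => p.eval x * q.eval x) MeasureTheory.volume (-1 : ℝ) 1 :=
  (p.continuous.mul q.continuous).intervalIntegrable _ _

theorem innerL2_comm (p q : ℝ[X]) : innerL2 p q = innerL2 q p := by
  simp only [innerL2, mul_comm]

theorem innerL2_add_left (p q r : ℝ[X]) : innerL2 (p + q) r = innerL2 p r + innerL2 q r := by
  simp only [innerL2, eval_add, add_mul]
  exact integral_add (intervalIntegrable_eval_mul_eval _ _) (intervalIntegrable_eval_mul_eval _ _)

theorem innerL2_sub_left (p q r : ℝ[X]) : innerL2 (p - q) r = innerL2 p r - innerL2 q r := by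
  simp only [innerL2, eval_sub, sub_mul]
  exact integral_sub (intervalIntegrable_eval_mul_eval _ _) (intervalIntegrable_eval_mul_eval _ _)

theorem innerL2_C_mul_left (a : ℝ) (p q : ℝ[X]) : innerL2 (C a * p) q = a * innerL2 p q := by
  simp only [innerL2, eval_mul, eval_C, mul_assoc, integral_const_mul]

theorem innerL2_derivative_left (p q : ℝ[X]) :
    innerL2 (derivative p) q =
      p.eval 1 * q.eval 1 - p.eval (-1) * q.eval (-1) - innerL2 p (derivative q) := by
  rw [innerL2_comm, innerL2, innerL2,
    integral_mul_deriv_eq_deriv_mul (fun x _ => q.hasDerivAt x) (fun x _ => p.hasDerivAt x)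
      ((derivative q).continuous.intervalIntegrable _ _)
      ((derivative p).continuous.intervalIntegrable _ _)]
  simp only [mul_comm]

theorem innerL2_iterate_derivative_left (k : ℕ) {p : ℝ[X]}
    (hp : ∀ m < k, (derivative^[m] p).eval (-1) = 0 ∧ (derivative^[m] p).eval 1 = 0)
    (q : ℝ[X]) :
    innerL2 (derivative^[k] p) q = (-1) ^ k * innerL2 p (derivative^[k] q) := by
  induction k generalizing p with
  | zero => simp
  | succ k ih =>
    have hp₀ : p.eval (-1) = 0 ∧ p.eval 1 = 0 := hp 0 k.succ_pos
    rw [Function.iterate_succ_apply, ih fun m hm => hp (m + 1) (by omega),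
      innerL2_derivative_left, hp₀.1, hp₀.2, ← Function.iterate_succ_apply' derivative]
    ring

theorem eval_iterate_derivative_X_sq_sub_one_pow {R : Type*} [CommRing R] {m n : ℕ}
    (hmn : m < n) {x : R} (hx : x ^ 2 = 1) : (derivative^[m] ((X ^ 2 - 1) ^ n)).eval x = 0 := by
  obtain ⟨q, hq⟩ := pow_sub_dvd_iterate_derivative_pow ((X : R[X]) ^ 2 - 1) n m
  rw [hq, eval_mul, eval_pow, eval_sub, eval_pow, eval_X, eval_one, hx, sub_self,
    zero_pow (by omega), zero_mul]

theorem innerL2_legendre_eq_zero {n : ℕ} {q : ℝ[X]} (hq : derivative^[n] q = 0) :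
    innerL2 (legendre n) q = 0 := by
  rw [legendre_eq_C_mul_rodrigues, innerL2_C_mul_left, rodrigues,
    innerL2_iterate_derivative_left n
      (fun m hm => ⟨eval_iterate_derivative_X_sq_sub_one_pow hm (by norm_num),
        eval_iterate_derivative_X_sq_sub_one_pow hm (by norm_num)⟩),
    hq]
  simp [innerL2]

theorem iterate_derivative_derivative_eq_zero {R : Type*} [Semiring R] {p : R[X]} {n : ℕ}
    (hp : p.natDegree ≤ n) :
    derivative^[n] (derivative p) = 0 := by
  rw [← Function.iterate_succ_apply, iterate_derivative_eq_zero (Nat.lt_succ_of_le hp)]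

theorem chi_eval_one (i : ℕ) : (chi i).eval 1 = 0 := by
  simp [chi, legendre_eval_one]

theorem chi_eval_neg_one (i : ℕ) : (chi i).eval (-1) = 2 * (-1) ^ i := by
  simp only [chi, eval_sub, legendre_eval_neg_one, pow_succ]
  ring

theorem natDegree_chi_le (i : ℕ) : (chi i).natDegree ≤ i + 1 :=
  (natDegree_sub_le _ _).trans
    (max_le ((natDegree_legendre_le i).trans i.le_succ) (natDegree_legendre_le (i + 1)))

theorem innerL2_chi_eq_zero {i : ℕ} {q : ℝ[X]} (hq : derivative^[i] q = 0) :
    innerL2 (chi i) q = 0 := by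
  have hq' : derivative^[i + 1] q = 0 := by rw [Function.iterate_succ_apply', hq, derivative_zero]
  rw [chi, innerL2_sub_left, innerL2_legendre_eq_zero hq, innerL2_legendre_eq_zero hq', sub_zero]

theorem X_add_one_mul_derivative_chi (i : ℕ) :
    (X + 1) * derivative (chi i) = -((i : ℝ[X]) + 1) * (legendre i + legendre (i + 1)) := by
  rw [chi, derivative_sub]
  linear_combination (-(X + 1 : ℝ[X])) * derivative_legendre_succ i + legendre_succ i

theorem innerL2_derivative_chi_legendre_self (i : ℕ) :
    innerL2 (derivative (chi i)) (legendre i) = -2 := by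
  rw [innerL2_derivative_left, chi_eval_one, chi_eval_neg_one, legendre_eval_neg_one,
    innerL2_chi_eq_zero (iterate_derivative_derivative_eq_zero (natDegree_legendre_le i)),
    mul_assoc, ← mul_pow]
  norm_num

theorem aMat_eq_innerL2 (i j : ℕ) :
    aMat i j = -((i : ℝ) + 1) * innerL2 (derivative (chi j)) (legendre i + legendre (i + 1)) := by
  rw [aMat, innerL2, ← integral_const_mul]
  congr 1
  funext x
  have h := congrArg (eval x) (X_add_one_mul_derivative_chi i)
  simp only [eval_mul, eval_add, eval_neg, eval_X, eval_one, eval_natCast] at h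
  rw [eval_add]
  linear_combination (eval x (derivative (chi j))) * h

theorem aMat_comm (i j : ℕ) : aMat i j = aMat j i := by
  simp only [aMat, mul_comm]

theorem aMat_eq_zero_of_lt {i j : ℕ} (hji : j < i) : aMat i j = 0 := by
  have h (n : ℕ) (hn : j + 1 ≤ n) : innerL2 (legendre n) (derivative (chi j)) = 0 :=
    innerL2_legendre_eq_zero
      (iterate_derivative_derivative_eq_zero ((natDegree_chi_le j).trans hn))
  rw [aMat_eq_innerL2, innerL2_comm, innerL2_add_left, h i hji, h (i + 1) (by omega)]
  ring

theorem aMat_self (i : ℕ) : aMat i i = 2 * (i : ℝ) + 2 := by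
  have h : innerL2 (legendre (i + 1)) (derivative (chi i)) = 0 :=
    innerL2_legendre_eq_zero (iterate_derivative_derivative_eq_zero (natDegree_chi_le i))
  rw [aMat_eq_innerL2, innerL2_comm, innerL2_add_left, innerL2_comm,
    innerL2_derivative_chi_legendre_self, h]
  ring

theorem stiffness_diagonal (i j : ℕ) :
    aMat i i = 2 * (i : ℝ) + 2 ∧ (i ≠ j → aMat i j = 0) := by
  refine ⟨aMat_self i, fun hij => ?_⟩
  rcases hij.lt_or_gt with hij | hji
  · rw [aMat_comm]
    exact aMat_eq_zero_of_lt hij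
  · exact aMat_eq_zero_of_lt hji
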